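/- arXiv:1112.4981 — 3 statements merged into one kernel-verified Lean document; each statement's English description precedes it below -/
import Mathlib

section
/- The formal power series G_n(x) = ∑_{ℓ∈ℕⁿ} (|ℓ|!/ℓ!)² x^ℓ satisfies the partial differential equation δ_{x_n}² G_n = x_n (𝒟 + 1)² G_n, where δ_{x_j} = x_j ∂/∂x_j and 𝒟 = δ_{x_1} + ... + δ_{x_n}. -/
/-- Coefficient function of the formal power series
`G_n(x) = ∑_{ℓ∈ℕⁿ} (|ℓ|!/ℓ!)² x^ℓ`: the coefficient of `x^ℓ` is `(|ℓ|!/ℓ!)²`. -/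
noncomputable def Gcoeff (n : ℕ) (ℓ : Fin n →₀ ℕ) : ℂ :=
  (((∑ j, ℓ j).factorial : ℂ) / ∏ j, ((ℓ j).factorial : ℂ)) ^ 2

/-- The Euler operator `δ_{x_j} = x_j ∂/∂x_j`, acting on formal power series
represented by their coefficient functions. -/
noncomputable def eulerOp {n : ℕ} (j : Fin n) (f : (Fin n →₀ ℕ) → ℂ) :
    (Fin n →₀ ℕ) → ℂ :=
  fun ℓ => (ℓ j : ℂ) * f ℓ

/-- `𝒟 = δ_{x_1} + ⋯ + δ_{x_n}`. -/
noncomputable def DOp {n : ℕ} (f : (Fin n →₀ ℕ) → ℂ) : (Fin n →₀ ℕ) → ℂ :=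
  fun ℓ => ∑ j, eulerOp j f ℓ

/-- The operator `𝒟 + m`. -/
noncomputable def shiftOp {n : ℕ} (m : ℕ) (f : (Fin n →₀ ℕ) → ℂ) :
    (Fin n →₀ ℕ) → ℂ :=
  fun ℓ => DOp f ℓ + (m : ℂ) * f ℓ

/-- Multiplication of a formal power series by the variable `x_j`. -/
noncomputable def mulX {n : ℕ} (j : Fin n) (f : (Fin n →₀ ℕ) → ℂ) :
    (Fin n →₀ ℕ) → ℂ :=
  fun ℓ => if ℓ j = 0 then 0 else f (ℓ - Finsupp.single j 1)

/-!
Raising `ℓ_j` by one multiplies the multinomial coefficient `|ℓ|!/ℓ!` by `(|ℓ| + 1)/(ℓ_j + 1)`,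
so `(ℓ_j + 1)² G(ℓ + e_j) = (|ℓ| + 1)² G(ℓ)`. This is the PDE read off at the coefficient of
`x^(ℓ + e_j)`; at coefficients with `ℓ_j = 0` both sides vanish.
-/

open Finset Nat

section
variable {ι : Type*} [Fintype ι] (ℓ : ι →₀ ℕ) (j : ι)

theorem Finsupp.sum_univ_add_single :
    ∑ i, (ℓ + Finsupp.single j 1 : ι →₀ ℕ) i = ∑ i, ℓ i + 1 := by
  classical
  simp [Finsupp.single_apply, Finset.sum_add_distrib]

theorem Finsupp.prod_univ_factorial_add_single :
    ∏ i, ((ℓ + Finsupp.single j 1 : ι →₀ ℕ) i)! = (ℓ j + 1) * ∏ i, (ℓ i)! := by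
  classical
  rw [← Finset.mul_prod_erase _ _ (mem_univ j), ← Finset.mul_prod_erase _ _ (mem_univ j)]
  have hrest : ∀ i ∈ univ.erase j, (ℓ + Finsupp.single j 1 : ι →₀ ℕ) i = ℓ i := fun i hi => by
    simp [(Finset.ne_of_mem_erase hi).symm]
  rw [Finset.prod_congr rfl fun i hi => congrArg factorial (hrest i hi)]
  simp [Nat.factorial_succ, mul_assoc]

theorem Nat.succ_mul_multinomial_add_single :
    (ℓ j + 1) * multinomial univ (ℓ + Finsupp.single j 1 : ι →₀ ℕ) =
      (∑ i, ℓ i + 1) * multinomial univ ℓ := by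
  have hpos : 0 < ∏ i, (ℓ i)! := prod_pos fun i _ => factorial_pos _
  refine Nat.eq_of_mul_eq_mul_left hpos ?_
  have h₁ := multinomial_spec univ (ℓ + Finsupp.single j 1 : ι →₀ ℕ)
  have h₂ := multinomial_spec univ ℓ
  rw [Finsupp.prod_univ_factorial_add_single, Finsupp.sum_univ_add_single, factorial_succ] at h₁
  calc (∏ i, (ℓ i)!) * ((ℓ j + 1) * multinomial univ (ℓ + Finsupp.single j 1 : ι →₀ ℕ))
      = (∑ i, ℓ i + 1) * (∑ i, ℓ i)! := by rw [← h₁]; ring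
    _ = _ := by rw [← h₂]; ring
end

section
variable {n : ℕ}

theorem Gcoeff_eq_multinomial_sq (ℓ : Fin n →₀ ℕ) :
    Gcoeff n ℓ = (multinomial univ ℓ : ℂ) ^ 2 := by
  have hprod : (∏ j, ((ℓ j)! : ℂ)) ≠ 0 :=
    prod_ne_zero_iff.2 fun j _ => mod_cast factorial_ne_zero _
  rw [Gcoeff, ← multinomial_spec univ ℓ, cast_mul, cast_prod, mul_div_cancel_left₀ _ hprod]

theorem eulerOp_eulerOp_apply (j : Fin n) (f : (Fin n →₀ ℕ) → ℂ) (ℓ : Fin n →₀ ℕ) :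
    eulerOp j (eulerOp j f) ℓ = (ℓ j : ℂ) ^ 2 * f ℓ := by
  simp only [eulerOp]; ring

theorem shiftOp_apply (m : ℕ) (f : (Fin n →₀ ℕ) → ℂ) (ℓ : Fin n →₀ ℕ) :
    shiftOp m f ℓ = ((∑ j, ℓ j : ℕ) + m : ℂ) * f ℓ := by
  simp only [shiftOp, DOp, eulerOp, ← sum_mul]; push_cast; ring

theorem mulX_apply_add_single (j : Fin n) (f : (Fin n →₀ ℕ) → ℂ) (ℓ : Fin n →₀ ℕ) :
    mulX j f (ℓ + Finsupp.single j 1) = f ℓ := by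
  simp [mulX]

theorem eulerOp_eulerOp_Gcoeff (j : Fin n) :
    eulerOp j (eulerOp j (Gcoeff n)) = mulX j (shiftOp 1 (shiftOp 1 (Gcoeff n))) := by
  funext ℓ
  by_cases h : ℓ j = 0
  · simp [eulerOp, mulX, h]
  obtain ⟨ℓ, rfl⟩ : ∃ ℓ', ℓ = ℓ' + Finsupp.single j 1 :=
    ⟨ℓ - Finsupp.single j 1, (tsub_add_cancel_of_le (by simpa [Nat.one_le_iff_ne_zero])).symm⟩
  have hsq := congrArg (fun k : ℕ => (k : ℂ) ^ 2) (succ_mul_multinomial_add_single ℓ j)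
  simp only [eulerOp_eulerOp_apply, mulX_apply_add_single, shiftOp_apply,
    Gcoeff_eq_multinomial_sq, Finsupp.add_apply, Finsupp.single_eq_same] at hsq ⊢
  push_cast at hsq ⊢
  linear_combination hsq
end

/-- The series `G_n` satisfies the PDE `δ_{x_n}² G_n = x_n (𝒟 + 1)² G_n`. -/
theorem Gn_PDE (n : ℕ) :
    eulerOp (Fin.last n) (eulerOp (Fin.last n) (Gcoeff (n + 1))) =
      mulX (Fin.last n) (shiftOp 1 (shiftOp 1 (Gcoeff (n + 1)))) :=
  eulerOp_eulerOp_Gcoeff (Fin.last n)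
end

section
/- For every positive integer k and every j ∈ {1,...,n}, the series G_n satisfies ((1/x_j) δ_{x_j}²)^k G_n(x) = ∑_{ℓ∈ℕⁿ} ((|ℓ|+k)!/ℓ!)² x^ℓ, as an identity of formal power series (after noting that δ_{x_j}² applied to G_n is divisible by x_j). -/
/-- The operator `(1/x_j) δ_{x_j}²`, on coefficient functions: the coefficient at `ℓ` of
`(1/x_j) δ_{x_j}² f` is `(ℓ_j + 1)²` times the coefficient of `f` at `ℓ + e_j`
(this uses that `δ_{x_j}² f` is divisible by `x_j`). -/
noncomputable def invXDelSq {n : ℕ} (j : Fin n) (f : (Fin n →₀ ℕ) → ℂ) :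
    (Fin n →₀ ℕ) → ℂ :=
  fun ℓ => ((ℓ j : ℂ) + 1) ^ 2 * f (ℓ + Finsupp.single j 1)

open Finset

section Finsupp

variable {ι : Type*} [Fintype ι]

theorem Finsupp.sum_univ_add_single_apply (ℓ : ι →₀ ℕ) (j : ι) (a : ℕ) :
    ∑ i, (ℓ + Finsupp.single j a : ι →₀ ℕ) i = ∑ i, ℓ i + a := by
  simp [sum_add_distrib]

theorem Finsupp.prod_univ_factorial_add_single_one (ℓ : ι →₀ ℕ) (j : ι) :
    ∏ i, ((ℓ + Finsupp.single j 1 : ι →₀ ℕ) i).factorial = (ℓ j + 1) * ∏ i, (ℓ i).factorial := by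
  classical
  rw [Fintype.prod_eq_mul_prod_compl j, Fintype.prod_eq_mul_prod_compl j (fun i => (ℓ i).factorial)]
  simp only [Finsupp.coe_add, Pi.add_apply, Finsupp.single_eq_same, Nat.factorial_succ, mul_assoc]
  congr 2
  refine Finset.prod_congr rfl fun i hi => ?_
  rw [Finsupp.single_eq_of_ne (by simpa using hi), add_zero]

end Finsupp

noncomputable def shiftedMultinomialSq (n m : ℕ) (ℓ : Fin n →₀ ℕ) : ℂ :=
  ((((∑ i, ℓ i) + m).factorial : ℂ) / ∏ i, ((ℓ i).factorial : ℂ)) ^ 2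

theorem shiftedMultinomialSq_zero (n : ℕ) : shiftedMultinomialSq n 0 = Gcoeff n := by
  funext ℓ
  simp [shiftedMultinomialSq, Gcoeff]

theorem invXDelSq_shiftedMultinomialSq {n : ℕ} (j : Fin n) (m : ℕ) :
    invXDelSq j (shiftedMultinomialSq n m) = shiftedMultinomialSq n (m + 1) := by
  funext ℓ
  have hprod : ∏ i, (((ℓ + Finsupp.single j 1 : Fin n →₀ ℕ) i).factorial : ℂ) =
      ((ℓ j : ℂ) + 1) * ∏ i, ((ℓ i).factorial : ℂ) := by
    exact_mod_cast Finsupp.prod_univ_factorial_add_single_one ℓ j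
  have hne : (ℓ j : ℂ) + 1 ≠ 0 := Nat.cast_add_one_ne_zero _
  simp only [invXDelSq, shiftedMultinomialSq, Finsupp.sum_univ_add_single_apply, hprod,
    add_right_comm _ 1 m, add_assoc]
  field_simp

theorem invXDelSq_iterate_Gn_general (n k : ℕ) (j : Fin n) :
    (invXDelSq j)^[k] (Gcoeff n) =
      fun ℓ : Fin n →₀ ℕ =>
        ((((∑ i, ℓ i) + k).factorial : ℂ) / ∏ i, ((ℓ i).factorial : ℂ)) ^ 2 := by
  have hstep : Function.Semiconj (shiftedMultinomialSq n) Nat.succ (invXDelSq j) :=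
    fun m => (invXDelSq_shiftedMultinomialSq j m).symm
  calc (invXDelSq j)^[k] (Gcoeff n)
      = (invXDelSq j)^[k] (shiftedMultinomialSq n 0) := by rw [shiftedMultinomialSq_zero]
    _ = shiftedMultinomialSq n (Nat.succ^[k] 0) := (hstep.iterate_right k 0).symm
    _ = shiftedMultinomialSq n k := by rw [Nat.succ_iterate, zero_add]

/-- For every `k ≥ 1` and every `j`,
`((1/x_j) δ_{x_j}²)^k G_n = ∑_{ℓ∈ℕⁿ} ((|ℓ|+k)!/ℓ!)² x^ℓ`. -/
theorem invXDelSq_iterate_Gn (n k : ℕ) (hk : 1 ≤ k) (j : Fin n) :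
    (invXDelSq j)^[k] (Gcoeff n) =
      fun ℓ : Fin n →₀ ℕ =>
        ((((∑ i, ℓ i) + k).factorial : ℂ) / ∏ i, ((ℓ i).factorial : ℂ)) ^ 2 :=
  invXDelSq_iterate_Gn_general n k j
end

section
/- Let Q_n(x) = (1 - ∑_{j=1}^n x_j)² - 2∑_{i≠j} x_i x_j and let T_{n,j} be the involution of (ℂ*)ⁿ given by T_{n,j}(x) = (x₁/x_j, ..., x_{j-1}/x_j, 1/x_j, x_{j+1}/x_j, ..., x_n/x_j). Then Q_n(T_{n,j}(x)) = Q_n(x)/x_j² for all x ∈ (ℂ*)ⁿ. -/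
/-!
Write `T_{n,j} x = y / x_j`, where `y` is `x` with its `j`-th coordinate replaced by `1`.
Since `∑_{i≠j} x_i x_j = p₁² - p₂` for the power sums `p₁ = ∑ x_i`, `p₂ = ∑ x_i²`, the polynomial
`Q_n` is a polynomial in `p₁, p₂`, and the power sums of `y` are those of `x` with `x_j`, `x_j²`
replaced by `1`. The identity thus becomes a polynomial identity in `p₁, p₂, x_j`.
-/

/-- `Q_n(x) = (1 - ∑_j x_j)² - 2 ∑_{i≠j} x_i x_j` (sum over ordered pairs `i ≠ j`). -/
noncomputable def Qn {n : ℕ} (x : Fin n → ℂ) : ℂ :=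
  (1 - ∑ j, x j) ^ 2 - 2 * ∑ p ∈ Finset.univ.offDiag, x p.1 * x p.2

/-- The involution `T_{n,j}` of `(ℂ*)ⁿ`: divide every coordinate by `x_j`
and invert the `j`-th one. -/
noncomputable def Tnj {n : ℕ} (j : Fin n) (x : Fin n → ℂ) : Fin n → ℂ :=
  fun i => if i = j then 1 / x j else x i / x j

theorem Finset.sum_offDiag_mul {ι R : Type*} [CommRing R] [DecidableEq ι] (s : Finset ι)
    (f : ι → R) :
    ∑ p ∈ s.offDiag, f p.1 * f p.2 = (∑ i ∈ s, f i) ^ 2 - ∑ i ∈ s, f i ^ 2 := by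
  rw [sq, Finset.sum_mul_sum, ← Finset.sum_product', ← Finset.diag_union_offDiag,
    Finset.sum_union (Finset.disjoint_diag_offDiag s), Finset.sum_diag]
  simp only [sq, add_sub_cancel_left]

theorem Fintype.sum_comp_update {ι α M : Type*} [Fintype ι] [DecidableEq ι] [AddCommGroup M]
    (g : α → M) (f : ι → α) (i : ι) (b : α) :
    ∑ k, g (Function.update f i b k) = ∑ k, g (f k) - g (f i) + g b := by
  rw [Finset.sum_eq_sum_sdiff_singleton_add (Finset.mem_univ i) (fun k => g (f k)),
    ← Function.comp_def g, Function.comp_update, Finset.sum_update_of_mem (Finset.mem_univ i)]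
  simp only [Function.comp_apply]
  abel

theorem Qn_eq_powerSums {n : ℕ} (x : Fin n → ℂ) :
    Qn x = (1 - ∑ i, x i) ^ 2 - 2 * ((∑ i, x i) ^ 2 - ∑ i, x i ^ 2) := by
  rw [Qn, Finset.sum_offDiag_mul]

theorem Tnj_eq_update_div {n : ℕ} (j : Fin n) (x : Fin n → ℂ) :
    Tnj j x = fun i => Function.update x j 1 i / x j := by
  ext i
  by_cases h : i = j <;> simp [Tnj, h]

/-- `Q_n(T_{n,j} x) = Q_n(x)/x_j²` for all `x ∈ (ℂ*)ⁿ`. -/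
theorem Qn_Tnj {n : ℕ} (j : Fin n) (x : Fin n → ℂ) (hx : ∀ i, x i ≠ 0) :
    Qn (Tnj j x) = Qn x / (x j) ^ 2 := by
  have hj := hx j
  have h₁ : ∑ i, Function.update x j 1 i = ∑ i, x i - x j + 1 :=
    Fintype.sum_comp_update id x j 1
  have h₂ : ∑ i, Function.update x j 1 i ^ 2 = ∑ i, x i ^ 2 - x j ^ 2 + 1 := by
    rw [Fintype.sum_comp_update (· ^ 2) x j 1, one_pow]
  rw [Tnj_eq_update_div, Qn_eq_powerSums, Qn_eq_powerSums]
  simp only [div_pow, ← Finset.sum_div, h₁, h₂]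
  field_simp
  ring
end
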